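/- Let X and Y be finite simple graphs. If (S_Y = ∅ or X is connected) and (T_Y = ∅ or X^c is connected), then every automorphism of the lexicographic product X ∘ Y lies in the image of the natural embedding of Aut(X) ≀ Aut(Y), i.e. Aut(X ∘ Y) ≅ Aut(X) ≀ Aut(Y) (Sabidussi's theorem, sufficiency direction). -/

import Mathlib

/-- The lexicographic product `X ∘ Y`: vertex set `X × Y`, with
`(i,α) ~ (j,β)` iff (`α = β` and `i ~_X j`) or `α ~_Y β`. -/
def lexProd {α β : Type*} (X : SimpleGraph α) (Y : SimpleGraph β) :
    SimpleGraph (α × β) where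
  Adj p q := (p.2 = q.2 ∧ X.Adj p.1 q.1) ∨ Y.Adj p.2 q.2
  symm := by
    constructor
    rintro ⟨i, a⟩ ⟨j, b⟩ (⟨h1, h2⟩ | h)
    · exact Or.inl ⟨h1.symm, h2.symm⟩
    · exact Or.inr h.symm
  loopless := by
    constructor
    rintro ⟨i, a⟩ (⟨-, h⟩ | h)
    · exact X.loopless.irrefl i h
    · exact Y.loopless.irrefl a h

/-- A permutation of the vertices is a graph automorphism if it preserves adjacency. -/
def IsGraphAut {α : Type*} (X : SimpleGraph α) (σ : Equiv.Perm α) : Prop :=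
  ∀ i j, X.Adj (σ i) (σ j) ↔ X.Adj i j

/-- The permutation `(i,a) ↦ (σ_a i, τ a)` of `α × β`. -/
def wreathMap {α β : Type*} (σ : β → Equiv.Perm α) (τ : Equiv.Perm β) :
    Equiv.Perm (α × β) where
  toFun p := (σ p.2 p.1, τ p.2)
  invFun q := ((σ (τ.symm q.2)).symm q.1, τ.symm q.2)
  left_inv := by rintro ⟨i, a⟩; simp
  right_inv := by rintro ⟨j, b⟩; simp

/-!
Each fibre `α × {a}` is a module of `X ∘ Y`, hence so is its image under an automorphism `f`.
Suppose this image meets two columns `c ≠ d`. Having only `|α|` points, it misses a vertex of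
every column, and comparing adjacencies from such vertices shows that any two columns it meets
have the same neighbours outside themselves; so `Y` is complete or empty on these columns. If
empty, `c, d` are false twins and `f` keeps the `X`-edges of the fibre inside one column, so `X`
is disconnected. If complete, the same argument in `(X ∘ Y)ᶜ = Xᶜ ∘ Yᶜ` makes `c, d` true twins
and `Xᶜ` disconnected. Hence `f` and `f⁻¹` map fibres into fibres, which makes `f` a wreath map,
whose components are then automorphisms of `X` and `Y`.
-/

theorem SimpleGraph.Reachable.apply_eq_of_forall_adj {V γ : Type*} {G : SimpleGraph V}
    {g : V → γ} (hg : ∀ u v, G.Adj u v → g u = g v) {u v : V} (h : G.Reachable u v) :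
    g u = g v := by
  obtain ⟨p⟩ := h
  induction p with
  | nil => rfl
  | cons hadj _ ih => exact (hg _ _ hadj).trans ih

theorem SimpleGraph.neighborSet_union_eq_of_compl {β : Type*} {Y : SimpleGraph β} {c d : β}
    (h : Yᶜ.neighborSet c = Yᶜ.neighborSet d) :
    Y.neighborSet c ∪ {c} = Y.neighborSet d ∪ {d} := by
  simp only [SimpleGraph.neighborSet_compl, Set.sdiff_eq, ← Set.compl_union] at h
  exact compl_injective h

theorem SimpleGraph.adj_iff_adj_of_twins {β : Type*} {Y : SimpleGraph β} {s : Set β}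
    (hs : ∀ c ∈ s, ∀ d ∈ s, c ≠ d → ∀ e ∈ s, e ≠ c → e ≠ d → (Y.Adj e c ↔ Y.Adj e d))
    {c d c' d' : β} (hc : c ∈ s) (hd : d ∈ s) (hc' : c' ∈ s) (hd' : d' ∈ s)
    (hcd : c ≠ d) (hcd' : c' ≠ d') : Y.Adj c d ↔ Y.Adj c' d' := by
  have hleft : ∀ c ∈ s, ∀ d ∈ s, ∀ d' ∈ s, c ≠ d → c ≠ d' → (Y.Adj c d ↔ Y.Adj c d') := by
    intro c hc d hd d' hd' h h'
    by_cases hdd' : d = d'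
    · rw [hdd']
    · exact hs d hd d' hd' hdd' c hc h h'
  by_cases hcc' : c = c'
  · subst hcc'
    exact hleft c hc d hd d' hd' hcd hcd'
  · calc Y.Adj c d ↔ Y.Adj c c' := hleft c hc d hd c' hc' hcd hcc'
      _ ↔ Y.Adj c' c := Y.adj_comm _ _
      _ ↔ Y.Adj c' d' := hleft c' hc' c hc d' hd' (Ne.symm hcc') hcd'

theorem exists_mk_notMem_range {α β : Type*} [Finite α] {g : α → α × β} {i j : α}
    (hij : (g i).2 ≠ (g j).2) (e : β) :
    ∃ k, (k, e) ∉ Set.range g := by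
  by_contra! hall
  choose s hs using hall
  have hs_surj : Function.Surjective s :=
    Finite.injective_iff_surjective.mp fun k k' hkk' => by
      have hk := hs k
      rw [hkk', hs k'] at hk
      exact (Prod.mk.inj hk).1.symm
  obtain ⟨k, rfl⟩ := hs_surj i
  obtain ⟨k', rfl⟩ := hs_surj j
  exact hij (by rw [hs, hs])

theorem IsGraphAut.symm {V : Type*} {G : SimpleGraph V} {f : Equiv.Perm V}
    (hf : IsGraphAut G f) : IsGraphAut G f.symm := fun u v => by
  rw [← hf, f.apply_symm_apply, f.apply_symm_apply]

theorem IsGraphAut.compl {V : Type*} {G : SimpleGraph V} {f : Equiv.Perm V}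
    (hf : IsGraphAut G f) : IsGraphAut Gᶜ f := fun u v => by
  simp only [SimpleGraph.compl_adj, hf u v, f.injective.ne_iff]

namespace lexProd

variable {α β : Type*} {X : SimpleGraph α} {Y : SimpleGraph β}

theorem adj_mk_mk_same {i j : α} {a : β} : (lexProd X Y).Adj (i, a) (j, a) ↔ X.Adj i j := by
  simp [lexProd]

theorem adj_of_snd_ne {p q : α × β} (h : p.2 ≠ q.2) :
    (lexProd X Y).Adj p q ↔ Y.Adj p.2 q.2 := by
  simp [lexProd, h]

theorem compl_eq : (lexProd X Y)ᶜ = lexProd Xᶜ Yᶜ := by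
  ext ⟨i, a⟩ ⟨j, b⟩
  by_cases h : a = b
  · subst h
    simp [lexProd]
  · simp [lexProd, h]

end lexProd

theorem wreathMap_apply {α β : Type*} (σ : β → Equiv.Perm α) (τ : Equiv.Perm β)
    (i : α) (a : β) :
    wreathMap σ τ (i, a) = (σ a i, τ a) :=
  rfl

def MapsFibres {α β : Type*} (f : α × β → α × β) : Prop :=
  ∀ a i j, (f (i, a)).2 = (f (j, a)).2

theorem exists_eq_wreathMap {α β : Type*} [Nonempty α] {f : Equiv.Perm (α × β)}
    (hf : MapsFibres f) (hf' : MapsFibres f.symm) : ∃ σ τ, f = wreathMap σ τ := by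
  obtain ⟨i₀⟩ := ‹Nonempty α›
  set τ : β → β := fun b => (f (i₀, b)).2 with hτ
  have snd_apply (p : α × β) : (f p).2 = τ p.2 := hf p.2 p.1 i₀
  have τ_inj : Function.Injective τ := fun x y hxy => by
    have hx : (f.symm ((f (i₀, x)).1, τ x)).2 = (f.symm ((f (i₀, y)).1, τ y)).2 :=
      hxy ▸ hf' (τ x) _ _
    simpa [hτ] using hx
  have τ_surj : Function.Surjective τ := fun b => ⟨(f.symm (i₀, b)).2, by
    rw [← snd_apply, f.apply_symm_apply]⟩
  have σ_bij (a : β) : Function.Bijective fun i => (f (i, a)).1 := by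
    refine ⟨fun i j hij => ?_, fun k => ?_⟩
    · exact congrArg Prod.fst (f.injective (Prod.ext hij (hf a i j)))
    · obtain ⟨⟨j, b⟩, hjb⟩ : ∃ p, f p = (k, τ a) := ⟨_, f.apply_symm_apply _⟩
      obtain rfl : b = a := τ_inj (by rw [← snd_apply (j, b), hjb])
      exact ⟨j, by simp only [hjb]⟩
  refine ⟨fun a => Equiv.ofBijective _ (σ_bij a), Equiv.ofBijective τ ⟨τ_inj, τ_surj⟩, ?_⟩
  ext p
  · rfl
  · exact snd_apply p

namespace IsGraphAut

variable {α β : Type*} {X : SimpleGraph α} {Y : SimpleGraph β} {f : Equiv.Perm (α × β)}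

/-- The fibre `α × {a}` is a module of `X ∘ Y`, hence so is its image under `f`. -/
theorem lexProd_adj_apply_iff (hf : IsGraphAut (lexProd X Y) f) {a : β} {v : α × β}
    (hv : v ∉ Set.range fun i => f (i, a)) (i j : α) :
    (lexProd X Y).Adj v (f (i, a)) ↔ (lexProd X Y).Adj v (f (j, a)) := by
  have hva : (f.symm v).2 ≠ a := fun h => hv ⟨(f.symm v).1, by subst h; simp⟩
  rw [← hf.symm v (f (i, a)), ← hf.symm v (f (j, a)), f.symm_apply_apply, f.symm_apply_apply,
    lexProd.adj_of_snd_ne hva, lexProd.adj_of_snd_ne hva]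

theorem lexProd_adj_snd_iff [Finite α] (hf : IsGraphAut (lexProd X Y) f) {a : β} {i j : α}
    (hij : (f (i, a)).2 ≠ (f (j, a)).2) {e : β} (hei : e ≠ (f (i, a)).2)
    (hej : e ≠ (f (j, a)).2) : Y.Adj e (f (i, a)).2 ↔ Y.Adj e (f (j, a)).2 := by
  obtain ⟨k, hk⟩ := exists_mk_notMem_range (g := fun k => f (k, a)) hij e
  rw [← lexProd.adj_of_snd_ne (X := X) (p := (k, e)) hei,
    ← lexProd.adj_of_snd_ne (X := X) (p := (k, e)) hej]
  exact hf.lexProd_adj_apply_iff hk i j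

theorem not_connected_and_neighborSet_eq [Finite α] (hf : IsGraphAut (lexProd X Y) f)
    {a : β} {i j : α} (hij : (f (i, a)).2 ≠ (f (j, a)).2)
    (hadj : ¬Y.Adj (f (i, a)).2 (f (j, a)).2) :
    ¬X.Connected ∧ Y.neighborSet (f (i, a)).2 = Y.neighborSet (f (j, a)).2 := by
  have hempty : ∀ u v, (f (u, a)).2 ≠ (f (v, a)).2 → ¬Y.Adj (f (u, a)).2 (f (v, a)).2 := by
    intro u v huv
    rwa [SimpleGraph.adj_iff_adj_of_twins (s := Set.range fun k => (f (k, a)).2) ?_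
      ⟨u, rfl⟩ ⟨v, rfl⟩ ⟨i, rfl⟩ ⟨j, rfl⟩ huv hij]
    rintro _ ⟨u', rfl⟩ _ ⟨v', rfl⟩ huv' e _ heu hev
    exact hf.lexProd_adj_snd_iff huv' heu hev
  refine ⟨fun hX => hij ?_, ?_⟩
  · refine (hX.preconnected i j).apply_eq_of_forall_adj (g := fun k => (f (k, a)).2)
      fun u v huv => by_contra fun huv' => ?_
    exact hempty u v huv' <| (lexProd.adj_of_snd_ne huv').mp <|
      (hf _ _).mpr <| lexProd.adj_mk_mk_same.mpr huv
  · ext e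
    simp only [SimpleGraph.mem_neighborSet]
    by_cases hei : e = (f (i, a)).2
    · subst hei
      exact iff_of_false (Y.loopless.irrefl _) fun h => hadj h.symm
    by_cases hej : e = (f (j, a)).2
    · subst hej
      exact iff_of_false hadj (Y.loopless.irrefl _)
    rw [Y.adj_comm, Y.adj_comm (f (j, a)).2]
    exact hf.lexProd_adj_snd_iff hij hei hej

theorem mapsFibres_of_lexProd [Finite α]
    (hS : (¬ ∃ y₀ y₁ : β, y₀ ≠ y₁ ∧ Y.neighborSet y₀ = Y.neighborSet y₁) ∨ X.Connected)
    (hT : (¬ ∃ y₀ y₁ : β, y₀ ≠ y₁ ∧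
            Y.neighborSet y₀ ∪ {y₀} = Y.neighborSet y₁ ∪ {y₁}) ∨ Xᶜ.Connected)
    (hf : IsGraphAut (lexProd X Y) f) : MapsFibres f := by
  intro a i j
  by_contra hij
  by_cases hadj : Y.Adj (f (i, a)).2 (f (j, a)).2
  · have hf' : IsGraphAut (lexProd Xᶜ Yᶜ) f := lexProd.compl_eq ▸ hf.compl
    obtain ⟨hX, hN⟩ := hf'.not_connected_and_neighborSet_eq hij fun h => h.2 hadj
    exact hT.elim (fun h => h ⟨_, _, hij, SimpleGraph.neighborSet_union_eq_of_compl hN⟩) hX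
  · obtain ⟨hX, hN⟩ := hf.not_connected_and_neighborSet_eq hij hadj
    exact hS.elim (fun h => h ⟨_, _, hij, hN⟩) hX

theorem of_wreathMap_left {σ : β → Equiv.Perm α} {τ : Equiv.Perm β}
    (hf : IsGraphAut (lexProd X Y) (wreathMap σ τ)) (a : β) : IsGraphAut X (σ a) := by
  intro i j
  have h := hf (i, a) (j, a)
  rwa [wreathMap_apply, wreathMap_apply, lexProd.adj_mk_mk_same, lexProd.adj_mk_mk_same] at h

theorem of_wreathMap_right [Nonempty α] {σ : β → Equiv.Perm α} {τ : Equiv.Perm β}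
    (hf : IsGraphAut (lexProd X Y) (wreathMap σ τ)) : IsGraphAut Y τ := by
  intro a b
  obtain ⟨i⟩ := ‹Nonempty α›
  by_cases hab : a = b
  · subst hab
    exact iff_of_false (Y.loopless.irrefl _) (Y.loopless.irrefl _)
  have h := hf (i, a) (i, b)
  rwa [wreathMap_apply, wreathMap_apply, lexProd.adj_of_snd_ne (τ.injective.ne hab),
    lexProd.adj_of_snd_ne hab] at h

end IsGraphAut

theorem sabidussi_sufficiency_general {α β : Type*} [Fintype α]
    (X : SimpleGraph α) (Y : SimpleGraph β)
    (hS : (¬ ∃ y₀ y₁ : β, y₀ ≠ y₁ ∧ Y.neighborSet y₀ = Y.neighborSet y₁) ∨ X.Connected)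
    (hT : (¬ ∃ y₀ y₁ : β, y₀ ≠ y₁ ∧
            Y.neighborSet y₀ ∪ {y₀} = Y.neighborSet y₁ ∪ {y₁}) ∨ Xᶜ.Connected)
    (f : Equiv.Perm (α × β)) (hf : IsGraphAut (lexProd X Y) f) :
    ∃ (σ : β → Equiv.Perm α) (τ : Equiv.Perm β),
      (∀ a, IsGraphAut X (σ a)) ∧ IsGraphAut Y τ ∧ f = wreathMap σ τ := by
  rcases isEmpty_or_nonempty α with _ | _
  · exact ⟨fun _ => 1, 1, fun _ _ _ => Iff.rfl, fun _ _ => Iff.rfl, Subsingleton.elim _ _⟩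
  obtain ⟨σ, τ, rfl⟩ :=
    exists_eq_wreathMap (hf.mapsFibres_of_lexProd hS hT) (hf.symm.mapsFibres_of_lexProd hS hT)
  exact ⟨σ, τ, hf.of_wreathMap_left, hf.of_wreathMap_right, rfl⟩

/-- **Sabidussi, sufficiency.** If (`S_Y = ∅` or `X` is connected) and
(`T_Y = ∅` or `Xᶜ` is connected), then every automorphism of the lexicographic product
`X ∘ Y` lies in the image of the natural embedding of `Aut(X) ≀ Aut(Y)`. -/
theorem sabidussi_sufficiency {α β : Type*} [Fintype α] [Fintype β]
    (X : SimpleGraph α) (Y : SimpleGraph β)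
    (hS : (¬ ∃ y₀ y₁ : β, y₀ ≠ y₁ ∧ Y.neighborSet y₀ = Y.neighborSet y₁) ∨ X.Connected)
    (hT : (¬ ∃ y₀ y₁ : β, y₀ ≠ y₁ ∧
            Y.neighborSet y₀ ∪ {y₀} = Y.neighborSet y₁ ∪ {y₁}) ∨ Xᶜ.Connected)
    (f : Equiv.Perm (α × β)) (hf : IsGraphAut (lexProd X Y) f) :
    ∃ (σ : β → Equiv.Perm α) (τ : Equiv.Perm β),
      (∀ a, IsGraphAut X (σ a)) ∧ IsGraphAut Y τ ∧ f = wreathMap σ τ :=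
  sabidussi_sufficiency_general X Y hS hT f hf
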